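/- Let ρ be a density matrix on ℂ^d with F(ρ) > 0, and let f_1,…,f_d be an orthonormal basis of ℂ^d attaining the maximum in F(ρ) = max over orthonormal bases of Σ_{i=1}^d |⟨f_i, √ρ e_i⟩|². Then the diagonal matrix σ_ρ = F(ρ)^{−1} Σ_{i=1}^d |⟨f_i, √ρ e_i⟩|² e_i e_i^† is an incoherent state and satisfies F(ρ, σ_ρ) = F(ρ); that is, σ_ρ is a closest incoherent state to ρ. -/

import Mathlib

open scoped BigOperators ComplexOrder

noncomputable section
open scoped Classical

/-- Positive semidefinite square root of a matrix (junk value `0` if not PSD). -/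
noncomputable def msqrt {d : ℕ} (A : Matrix (Fin d) (Fin d) ℂ) : Matrix (Fin d) (Fin d) ℂ :=
  if h : A.PosSemidef then
    (h.1.eigenvectorUnitary : Matrix (Fin d) (Fin d) ℂ) *
      Matrix.diagonal (fun i => ((Real.sqrt (h.1.eigenvalues i) : ℝ) : ℂ)) *
      (star h.1.eigenvectorUnitary : Matrix (Fin d) (Fin d) ℂ)
  else 0

/-- A density matrix: positive semidefinite with trace one. -/
def IsDensityMatrix {d : ℕ} (ρ : Matrix (Fin d) (Fin d) ℂ) : Prop :=
  ρ.PosSemidef ∧ ρ.trace = 1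

/-- An incoherent state: a density matrix diagonal in the standard basis. -/
def IsIncoherent {d : ℕ} (σ : Matrix (Fin d) (Fin d) ℂ) : Prop :=
  IsDensityMatrix σ ∧ ∀ i j, i ≠ j → σ i j = 0

/-- Fidelity `F(ρ,σ) = (Tr √(√σ ρ √σ))²`. -/
noncomputable def fid {d : ℕ} (ρ σ : Matrix (Fin d) (Fin d) ℂ) : ℝ :=
  ((msqrt (msqrt σ * ρ * msqrt σ)).trace).re ^ 2

/-- Maximal fidelity with incoherent states. -/
noncomputable def maxFid {d : ℕ} (ρ : Matrix (Fin d) (Fin d) ℂ) : ℝ :=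
  sSup {x : ℝ | ∃ σ, IsIncoherent σ ∧ x = fid ρ σ}

/-- Geometric coherence `C_g(ρ) = 1 − F(ρ)`. -/
noncomputable def geomCoh {d : ℕ} (ρ : Matrix (Fin d) (Fin d) ℂ) : ℝ :=
  1 - maxFid ρ

/-- A POVM with `n` outcomes on a Hilbert space. -/
def IsPOVM {H : Type*} [NormedAddCommGroup H] [InnerProductSpace ℂ H] [CompleteSpace H]
    {n : ℕ} (M : Fin n → H →L[ℂ] H) : Prop :=
  (∀ i, (M i).IsPositive) ∧ (∑ i, M i) = 1

/-- Optimal success probability of ambiguous discrimination of the ensemble `{ψ i, η i}`. -/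
noncomputable def optSuccess {H : Type*} [NormedAddCommGroup H] [InnerProductSpace ℂ H]
    [CompleteSpace H] {n : ℕ} (ψ : Fin n → H) (η : Fin n → ℝ) : ℝ :=
  sSup {x : ℝ | ∃ M : Fin n → H →L[ℂ] H, IsPOVM M ∧
    x = ∑ i, η i * ((inner ℂ (ψ i) ((M i) (ψ i)) : ℂ)).re}

/-- Optimal von Neumann success probability (over orthonormal bases of `ℂ^d`). -/
noncomputable def vnSuccess {d : ℕ} (ψ : Fin d → EuclideanSpace ℂ (Fin d))
    (η : Fin d → ℝ) : ℝ :=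
  sSup {x : ℝ | ∃ f : Fin d → EuclideanSpace ℂ (Fin d), Orthonormal ℂ f ∧
    x = ∑ i, η i * ‖(inner ℂ (f i) (ψ i) : ℂ)‖ ^ 2}

/-- The column `√ρ e_i` of the square root of `ρ`, as a vector of `ℂ^d`. -/
noncomputable def sqrtCol {d : ℕ} (ρ : Matrix (Fin d) (Fin d) ℂ) (i : Fin d) :
    EuclideanSpace ℂ (Fin d) :=
  WithLp.toLp 2 (fun j => msqrt ρ j i)

/-- The state `|ψ_i⟩ = η_i^{-1/2} √ρ e_i` of the discrimination ensemble associated to `ρ`. -/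
noncomputable def discVec {d : ℕ} (ρ : Matrix (Fin d) (Fin d) ℂ) (i : Fin d) :
    EuclideanSpace ℂ (Fin d) :=
  ((Real.sqrt ((ρ i i).re) : ℂ))⁻¹ • sqrtCol ρ i

/-- The QSD-state of an ensemble: `ρ_{ij} = √(η_i η_j) ⟨ψ_i|ψ_j⟩`. -/
noncomputable def qsdState {H : Type*} [NormedAddCommGroup H] [InnerProductSpace ℂ H]
    {n : ℕ} (ψ : Fin n → H) (η : Fin n → ℝ) : Matrix (Fin n) (Fin n) ℂ :=
  fun i j => (Real.sqrt (η i * η j) : ℂ) * (inner ℂ (ψ i) (ψ j) : ℂ)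


open scoped Matrix
open scoped MatrixOrder

lemma msqrt_eq {d : ℕ} {A : Matrix (Fin d) (Fin d) ℂ} (h : A.PosSemidef) :
    msqrt A = (h.1.eigenvectorUnitary : Matrix (Fin d) (Fin d) ℂ) *
      Matrix.diagonal (fun i => ((Real.sqrt (h.1.eigenvalues i) : ℝ) : ℂ)) *
      (star h.1.eigenvectorUnitary : Matrix (Fin d) (Fin d) ℂ) := dif_pos h

lemma msqrt_eq_csqrt {d : ℕ} {A : Matrix (Fin d) (Fin d) ℂ} (h : A.PosSemidef) :
    msqrt A = CFC.sqrt A := by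
  rw [CFC.sqrt_eq_real_sqrt A h.nonneg, cfcₙ_eq_cfc, h.1.cfc_eq, msqrt_eq h]
  simp [Matrix.IsHermitian.cfc, Function.comp_def]

lemma msqrt_diagonal {d : ℕ} (q : Fin d → ℝ) (hq : ∀ i, 0 ≤ q i) :
    msqrt (Matrix.diagonal fun i => (q i : ℂ)) =
      Matrix.diagonal (fun i => ((Real.sqrt (q i) : ℝ) : ℂ)) := by
  have hpsd : (Matrix.diagonal fun i => ((Real.sqrt (q i) : ℝ) : ℂ)).PosSemidef := by
    refine Matrix.posSemidef_diagonal_iff.mpr fun i => ?_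
    exact_mod_cast Complex.zero_le_real.mpr (Real.sqrt_nonneg _)
  have hsq : (Matrix.diagonal fun i => ((Real.sqrt (q i) : ℝ) : ℂ)) ^ 2 =
      (Matrix.diagonal fun i => (q i : ℂ)) := by
    have h1 : (fun i => ((Real.sqrt (q i) : ℝ) : ℂ) * ((Real.sqrt (q i) : ℝ) : ℂ))
        = fun i => ((q i : ℝ) : ℂ) := by
      funext i
      rw [← Complex.ofReal_mul, Real.mul_self_sqrt (hq i)]
    rw [pow_two, Matrix.diagonal_mul_diagonal, h1]
  have hpsd2 : (Matrix.diagonal fun i => (q i : ℂ)).PosSemidef := by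
    refine Matrix.posSemidef_diagonal_iff.mpr fun i => ?_
    exact_mod_cast Complex.zero_le_real.mpr (hq i)
  rw [msqrt_eq_csqrt hpsd2]
  exact CFC.sqrt_unique (by rw [← sq, hsq]) hpsd.nonneg

def mcol {d : ℕ} (P : Matrix (Fin d) (Fin d) ℂ) (k : Fin d) : EuclideanSpace ℂ (Fin d) :=
  WithLp.toLp 2 (fun j => P j k)

lemma inner_mcol {d : ℕ} (P Q : Matrix (Fin d) (Fin d) ℂ) (k : Fin d) :
    (inner ℂ (mcol P k) (mcol Q k) : ℂ) = (Pᴴ * Q) k k := by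
  simp [mcol, Matrix.mul_apply, Matrix.conjTranspose_apply, PiLp.inner_apply,
    RCLike.inner_apply, mul_comm]

lemma trace_re_le_sqrt {d : ℕ} {M B G : Matrix (Fin d) (Fin d) ℂ} (hM : M.PosSemidef)
    (hB : Bᴴ * B = M) (hG : Gᴴ * G = 1) :
    ((Gᴴ * B).trace).re ≤ ((msqrt M).trace).re := by
  set U : Matrix (Fin d) (Fin d) ℂ := (hM.1.eigenvectorUnitary : Matrix (Fin d) (Fin d) ℂ)
    with hUdef
  have hU1 : star U * U = 1 := Matrix.mem_unitaryGroup_iff'.mp hM.1.eigenvectorUnitary.2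
  have hU2 : U * star U = 1 := Matrix.mem_unitaryGroup_iff.mp hM.1.eigenvectorUnitary.2
  have hdg : star U * M * U = Matrix.diagonal (RCLike.ofReal ∘ hM.1.eigenvalues) := by
    have := hM.1.conjStarAlgAut_star_eigenvectorUnitary
    rw [Unitary.conjStarAlgAut_star_apply] at this
    exact this
  -- trace invariance
  have h0 : (G * U)ᴴ * (B * U) = star U * (Gᴴ * B) * U := by
    rw [Matrix.conjTranspose_mul, Matrix.star_eq_conjTranspose]
    simp only [Matrix.mul_assoc]
  have h1 : (Gᴴ * B).trace = ((G * U)ᴴ * (B * U)).trace := by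
    rw [h0, Matrix.trace_mul_cycle, ← Matrix.mul_assoc, hU2, one_mul]
  -- diagonal entries of (B*U)ᴴ * (B*U)
  have hBU : (B * U)ᴴ * (B * U) = Matrix.diagonal (RCLike.ofReal ∘ hM.1.eigenvalues) := by
    rw [Matrix.conjTranspose_mul, mul_assoc, ← mul_assoc Bᴴ, hB, ← mul_assoc,
      ← Matrix.star_eq_conjTranspose U, hdg]
  have hGU : (G * U)ᴴ * (G * U) = 1 := by
    rw [Matrix.conjTranspose_mul, mul_assoc, ← mul_assoc Gᴴ, hG, one_mul,
      ← Matrix.star_eq_conjTranspose U, hU1]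
  -- entrywise bound
  have key : ∀ k, (((G * U)ᴴ * (B * U)) k k).re ≤ Real.sqrt (hM.1.eigenvalues k) := by
    intro k
    have hp : (inner ℂ (mcol (G * U) k) (mcol (G * U) k) : ℂ) = 1 := by
      rw [inner_mcol, hGU, Matrix.one_apply_eq]
    have hq : (inner ℂ (mcol (B * U) k) (mcol (B * U) k) : ℂ)
        = ((hM.1.eigenvalues k : ℝ) : ℂ) := by
      rw [inner_mcol, hBU, Matrix.diagonal_apply_eq]
      rfl
    have hpn : ‖mcol (G * U) k‖ = 1 := by
      have h3 := inner_self_eq_norm_sq_to_K (𝕜 := ℂ) (mcol (G * U) k)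
      rw [hp] at h3
      have h2 : ((‖mcol (G * U) k‖ ^ 2 : ℝ) : ℂ) = ((1 : ℝ) : ℂ) := by
        push_cast
        exact h3.symm
      have h4 : ‖mcol (G * U) k‖ ^ 2 = 1 := Complex.ofReal_inj.mp h2
      nlinarith [norm_nonneg (mcol (G * U) k)]
    have hqn : ‖mcol (B * U) k‖ = Real.sqrt (hM.1.eigenvalues k) := by
      have h3 := inner_self_eq_norm_sq_to_K (𝕜 := ℂ) (mcol (B * U) k)
      rw [hq] at h3
      have h2 : ((‖mcol (B * U) k‖ ^ 2 : ℝ) : ℂ) = ((hM.1.eigenvalues k : ℝ) : ℂ) := by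
        push_cast
        exact h3.symm
      have h4 : hM.1.eigenvalues k = ‖mcol (B * U) k‖ ^ 2 := (Complex.ofReal_inj.mp h2).symm
      rw [h4, Real.sqrt_sq (norm_nonneg _)]
    have hcs := re_inner_le_norm (𝕜 := ℂ) (mcol (G * U) k) (mcol (B * U) k)
    rw [hpn, hqn, one_mul] at hcs
    calc (((G * U)ᴴ * (B * U)) k k).re
        = (inner ℂ (mcol (G * U) k) (mcol (B * U) k) : ℂ).re := by rw [inner_mcol]
      _ ≤ Real.sqrt (hM.1.eigenvalues k) := hcs
  -- trace of sqrt
  have h2 : ((msqrt M).trace).re = ∑ k, Real.sqrt (hM.1.eigenvalues k) := by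
    rw [msqrt_eq hM, Matrix.trace_mul_cycle, ← hUdef, hU1, one_mul,
      Matrix.trace_diagonal]
    rw [Complex.re_sum]
    exact Finset.sum_congr rfl fun k _ => by simp
  rw [h1, Matrix.trace, h2, Complex.re_sum]
  exact Finset.sum_le_sum fun k _ => key k
lemma star_unit_mul_self {z : ℂ} (h : z ≠ 0) : star (z / (‖z‖:ℂ)) * (z / (‖z‖:ℂ)) = 1 := by
  have hne : (‖z‖ : ℂ) ≠ 0 := by simpa using h
  rw [star_div₀, div_mul_div_comm, Complex.star_def, RCLike.conj_mul,
    Complex.conj_ofReal, sq]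
  field_simp
  rfl

lemma star_unit_mul {z : ℂ} (h : z ≠ 0) : star (z / (‖z‖:ℂ)) * z = (‖z‖:ℂ) := by
  have hne : (‖z‖ : ℂ) ≠ 0 := by simpa using h
  rw [star_div₀, div_mul_eq_mul_div, Complex.star_def, RCLike.conj_mul,
    Complex.conj_ofReal, sq]
  field_simp
  rfl

lemma key_lemma {d : ℕ} (ρ : Matrix (Fin d) (Fin d) ℂ) (hρ : ρ.PosSemidef)
    (F : ℝ) (hF : 0 < F)
    (f : Fin d → EuclideanSpace ℂ (Fin d)) (hf : Orthonormal ℂ f)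
    (a : Fin d → ℂ) (ha : ∀ i, a i = (inner ℂ (f i) (sqrtCol ρ i) : ℂ))
    (q : Fin d → ℝ) (hq : ∀ i, q i = ‖a i‖ ^ 2 / F)
    (hmax : ∑ i, ‖a i‖ ^ 2 = F) :
    Real.sqrt F ≤ ((msqrt (msqrt (Matrix.diagonal fun i => ((q i : ℝ) : ℂ)) * ρ *
      msqrt (Matrix.diagonal fun i => ((q i : ℝ) : ℂ)))).trace).re := by
  have hqnn : ∀ i, 0 ≤ q i := fun i => (hq i) ▸ div_nonneg (sq_nonneg _) hF.le
  set σ : Matrix (Fin d) (Fin d) ℂ := Matrix.diagonal fun i => ((q i : ℝ) : ℂ) with hσdef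
  have hD : msqrt σ = Matrix.diagonal (fun i => ((Real.sqrt (q i) : ℝ) : ℂ)) :=
    msqrt_diagonal q hqnn
  have hDH : (msqrt σ)ᴴ = msqrt σ := by
    have hstar : (star fun i => ((Real.sqrt (q i) : ℝ) : ℂ))
        = fun i => ((Real.sqrt (q i) : ℝ) : ℂ) := by
      funext i
      rw [Pi.star_apply, Complex.star_def, Complex.conj_ofReal]
    rw [hD, Matrix.diagonal_conjTranspose, hstar]
  set M : Matrix (Fin d) (Fin d) ℂ := msqrt σ * ρ * msqrt σ with hMdef
  have hM : M.PosSemidef := by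
    have h := hρ.mul_mul_conjTranspose_same (msqrt σ)
    rwa [hDH] at h
  have hρsqH : (msqrt ρ)ᴴ = msqrt ρ := by
    rw [msqrt_eq_csqrt hρ]
    exact (Matrix.nonneg_iff_posSemidef.mp (CFC.sqrt_nonneg ρ)).1
  set B : Matrix (Fin d) (Fin d) ℂ := msqrt ρ * msqrt σ with hBdef
  have hB : Bᴴ * B = M := by
    rw [hBdef, Matrix.conjTranspose_mul, hDH, hρsqH, hMdef, msqrt_eq_csqrt hρ,
      mul_assoc, ← mul_assoc (CFC.sqrt ρ), CFC.sqrt_mul_sqrt_self ρ hρ.nonneg, ← mul_assoc]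
  -- phases
  set c : Fin d → ℂ := fun i => if a i = 0 then 1 else a i / (‖a i‖ : ℂ) with hcdef
  have hcc : ∀ i, star (c i) * c i = 1 := by
    intro i
    by_cases h : a i = 0
    · simp [hcdef, h]
    · simp only [hcdef, if_neg h]
      exact star_unit_mul_self h
  have hca : ∀ i, star (c i) * a i = (‖a i‖ : ℂ) := by
    intro i
    by_cases h : a i = 0
    · simp [hcdef, h]
    · simp only [hcdef, if_neg h]
      exact star_unit_mul h
  set G : Matrix (Fin d) (Fin d) ℂ := Matrix.of fun j i => c i * f i j with hGdef
  -- inner products of f, in coordinates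
  have hff : ∀ i i', ∑ j, star (f i j) * f i' j = if i = i' then (1:ℂ) else 0 := by
    intro i i'
    have h := orthonormal_iff_ite.mp hf i i'
    simpa [PiLp.inner_apply, RCLike.inner_apply, Complex.star_def, mul_comm] using h
  have hG : Gᴴ * G = 1 := by
    ext i i'
    have h1 : (Gᴴ * G) i i' = star (c i) * c i' * ∑ j, star (f i j) * f i' j := by
      rw [Matrix.mul_apply, Finset.mul_sum]
      refine Finset.sum_congr rfl fun j _ => ?_
      simp only [Matrix.conjTranspose_apply, hGdef, Matrix.of_apply, star_mul']
      ring
    rw [h1, hff]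
    by_cases h : i = i'
    · subst h
      rw [if_pos rfl, mul_one, hcc i, Matrix.one_apply_eq]
    · rw [if_neg h, mul_zero, Matrix.one_apply_ne h]
  -- the diagonal entries of Gᴴ * B
  have hacoord : ∀ i, a i = ∑ j, star (f i j) * msqrt ρ j i := by
    intro i
    rw [ha i]
    simp [PiLp.inner_apply, RCLike.inner_apply, sqrtCol, Complex.star_def, mul_comm]
  have hdiag : ∀ i, (Gᴴ * B) i i = ((Real.sqrt (q i) * ‖a i‖ : ℝ) : ℂ) := by
    intro i
    have h1 : (Gᴴ * B) i i = (Real.sqrt (q i) : ℂ) * (star (c i) *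
        ∑ j, star (f i j) * msqrt ρ j i) := by
      rw [Matrix.mul_apply, Finset.mul_sum, Finset.mul_sum]
      refine Finset.sum_congr rfl fun j _ => ?_
      simp only [Matrix.conjTranspose_apply, hGdef, Matrix.of_apply, star_mul', hBdef, hD,
        Matrix.mul_diagonal]
      ring
    rw [h1, ← hacoord, hca]
    push_cast
    ring
  -- the trace of Gᴴ * B
  have hsum : ∑ i, Real.sqrt (q i) * ‖a i‖ = Real.sqrt F := by
    have h1 : ∀ i, Real.sqrt (q i) * ‖a i‖ = ‖a i‖ ^ 2 / Real.sqrt F := by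
      intro i
      rw [hq i, Real.sqrt_div (sq_nonneg _), Real.sqrt_sq (norm_nonneg _), sq]
      ring
    rw [Finset.sum_congr rfl fun i _ => h1 i, ← Finset.sum_div, hmax, Real.div_sqrt]
  have htr : ((Gᴴ * B).trace).re = Real.sqrt F := by
    rw [Matrix.trace]
    rw [Complex.re_sum]
    rw [Finset.sum_congr rfl fun i _ => by rw [Matrix.diag_apply, hdiag i, Complex.ofReal_re]]
    exact hsum
  have hfin := trace_re_le_sqrt hM hB hG
  rw [htr] at hfin
  exact hfin

/-- The closest incoherent state: the diagonal state built from an optimal orthonormal basis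
attains the maximal fidelity. -/
theorem closest_incoherent_state {d : ℕ} (ρ : Matrix (Fin d) (Fin d) ℂ)
    (hρ : IsDensityMatrix ρ) (hF : 0 < maxFid ρ)
    (hchar : maxFid ρ = sSup {x : ℝ | ∃ g : Fin d → EuclideanSpace ℂ (Fin d),
        Orthonormal ℂ g ∧ x = ∑ i, ‖(inner ℂ (g i) (sqrtCol ρ i) : ℂ)‖ ^ 2})
    (f : Fin d → EuclideanSpace ℂ (Fin d)) (hf : Orthonormal ℂ f)
    (hmax : ∑ i, ‖(inner ℂ (f i) (sqrtCol ρ i) : ℂ)‖ ^ 2 = maxFid ρ) :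
    IsIncoherent (Matrix.diagonal fun i =>
        ((‖(inner ℂ (f i) (sqrtCol ρ i) : ℂ)‖ ^ 2 / maxFid ρ : ℝ) : ℂ)) ∧
    fid ρ (Matrix.diagonal fun i =>
        ((‖(inner ℂ (f i) (sqrtCol ρ i) : ℂ)‖ ^ 2 / maxFid ρ : ℝ) : ℂ)) = maxFid ρ := by
  have hqnn : ∀ i, (0:ℝ) ≤ ‖(inner ℂ (f i) (sqrtCol ρ i) : ℂ)‖ ^ 2 / maxFid ρ :=
    fun i => div_nonneg (sq_nonneg _) hF.le
  set σ : Matrix (Fin d) (Fin d) ℂ := Matrix.diagonal fun i =>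
      ((‖(inner ℂ (f i) (sqrtCol ρ i) : ℂ)‖ ^ 2 / maxFid ρ : ℝ) : ℂ) with hσdef
  have hσpsd : σ.PosSemidef := by
    refine Matrix.posSemidef_diagonal_iff.mpr fun i => ?_
    exact_mod_cast Complex.zero_le_real.mpr (hqnn i)
  have hσtr : σ.trace = 1 := by
    rw [hσdef, Matrix.trace_diagonal, ← Complex.ofReal_sum, ← Finset.sum_div, hmax,
      div_self hF.ne', Complex.ofReal_one]
  have hinc : IsIncoherent σ := ⟨⟨hσpsd, hσtr⟩, fun i j hij => Matrix.diagonal_apply_ne _ hij⟩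
  refine ⟨hinc, le_antisymm ?_ ?_⟩
  · -- fid ρ σ ≤ maxFid ρ
    have hbdd : BddAbove {x : ℝ | ∃ τ, IsIncoherent τ ∧ x = fid ρ τ} := by
      by_contra hb
      have h0 : maxFid ρ = 0 := by
        rw [maxFid]
        exact Real.sSup_of_not_bddAbove hb
      rw [h0] at hF
      exact lt_irrefl 0 hF
    have hmem : fid ρ σ ∈ {x : ℝ | ∃ τ, IsIncoherent τ ∧ x = fid ρ τ} := ⟨σ, hinc, rfl⟩
    rw [show maxFid ρ = sSup {x : ℝ | ∃ τ, IsIncoherent τ ∧ x = fid ρ τ} from rfl]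
    exact le_csSup hbdd hmem
  · -- maxFid ρ ≤ fid ρ σ
    have hkey := key_lemma ρ hρ.1 (maxFid ρ) hF f hf
      (fun i => (inner ℂ (f i) (sqrtCol ρ i) : ℂ)) (fun i => rfl)
      (fun i => ‖(inner ℂ (f i) (sqrtCol ρ i) : ℂ)‖ ^ 2 / maxFid ρ) (fun i => rfl) hmax
    have h2 : Real.sqrt (maxFid ρ) ≤ ((msqrt (msqrt σ * ρ * msqrt σ)).trace).re := hkey
    have h3 : maxFid ρ ≤ ((msqrt (msqrt σ * ρ * msqrt σ)).trace).re ^ 2 := by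
      calc maxFid ρ = Real.sqrt (maxFid ρ) ^ 2 := (Real.sq_sqrt hF.le).symm
        _ ≤ ((msqrt (msqrt σ * ρ * msqrt σ)).trace).re ^ 2 :=
            pow_le_pow_left₀ (Real.sqrt_nonneg _) h2 2
    exact h3


end
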